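/- Let π be a random permutation of {1,...,n} from the Mallows(q) distribution and let σ ∈ S_m with m ≤ n. For any fixed position 1 ≤ i ≤ n−m+1, the probability that the standardization of π_i π_{i+1} ... π_{i+m−1} equals σ is q^{inv(σ)}/[m]_q! (independent of i and n). -/

import Mathlib

open scoped Classical

/-- The q-integer `[k]_q = 1 + q + ... + q^(k-1)`. -/
noncomputable def qint (q : ℝ) (k : ℕ) : ℝ := ∑ i ∈ Finset.range k, q ^ i

/-- The q-factorial `[n]_q! = [1]_q [2]_q ⋯ [n]_q`. -/
noncomputable def qfact (q : ℝ) (n : ℕ) : ℝ := ∏ i ∈ Finset.range n, qint q (i + 1)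

/-- The number of inversions of a permutation of `{0, ..., n-1}`. -/
def inversions {n : ℕ} (π : Equiv.Perm (Fin n)) : ℕ :=
  (Finset.univ.filter (fun p : Fin n × Fin n => p.1 < p.2 ∧ π p.2 < π p.1)).card

/-- The pattern `σ ∈ S_m` occurs consecutively in `π ∈ S_n` starting at (0-indexed) position `j`:
the window `π_j, ..., π_{j+m-1}` is order-isomorphic to `σ`. -/
def occursAt {m n : ℕ} (σ : Equiv.Perm (Fin m)) (π : Equiv.Perm (Fin n)) (j : ℕ) : Prop :=
  ∃ h : j + m ≤ n, ∀ a b : Fin m,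
    σ a < σ b ↔
      π ⟨j + (a : ℕ), lt_of_lt_of_le (Nat.add_lt_add_left a.isLt j) h⟩ <
      π ⟨j + (b : ℕ), lt_of_lt_of_le (Nat.add_lt_add_left b.isLt j) h⟩

/-- `π` avoids `σ` as a consecutive pattern. -/
def avoids {m n : ℕ} (σ : Equiv.Perm (Fin m)) (π : Equiv.Perm (Fin n)) : Prop :=
  ∀ j : ℕ, ¬ occursAt σ π j

/-- `P_n(σ, q)`: the probability that a Mallows(q) random permutation of length `n`
avoids `σ` as a consecutive pattern. -/
noncomputable def Pn (m : ℕ) (σ : Equiv.Perm (Fin m)) (q : ℝ) (n : ℕ) : ℝ :=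
  (∑ π ∈ Finset.univ.filter (fun π : Equiv.Perm (Fin n) => avoids σ π),
    q ^ inversions π) / qfact q n


/-! Fix the window `W` of positions `i, …, i + m - 1`. An inversion of `π` either lies inside `W`,
where it is an inversion of the pattern of `π` on `W`, or is a cross inversion. Multiplying `π` on
the right by a permutation `τ` acting only inside `W` multiplies the pattern by `τ` and, since `W`
is an interval, permutes the cross inversions. Hence the permutations with pattern `σ` carry
`q ^ inv σ` times the Mallows weight of those with the identity pattern, and the pattern is
Mallows distributed on `S_m` once `∑_{π ∈ S_k} q ^ inv π = [k]_q!` is known. That normalization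
comes from the same factorization for the window `{1, …, k}` in `S_(k+1)`: a permutation
increasing there is determined by `π 0`, which is also its number of inversions. -/

open Equiv Finset

variable {R : Type*} [CommSemiring R]

section Standardize

variable {α : Type*} [LinearOrder α] {m : ℕ}

theorem Equiv.Perm.eq_of_lt_iff_lt [WellFoundedLT α] {σ τ : Perm α}
    (h : ∀ a b, σ a < σ b ↔ τ a < τ b) : σ = τ := by
  let g : α ≃o α := ⟨σ.symm.trans τ, fun {x y} => by
    simpa [not_lt] using not_congr (h (σ.symm y) (σ.symm x)).symm⟩
  have hg : g = OrderIso.refl α := Subsingleton.elim _ _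
  ext a
  simpa [g] using (DFunLike.congr_fun hg (σ a)).symm

noncomputable def standardize (f : Fin m ↪ α) : Perm (Fin m) :=
  (Equiv.ofInjective f f.injective).trans
    (Fintype.orderIsoFinOfCardEq (Set.range f)
      (by rw [Set.card_range_of_injective f.injective, Fintype.card_fin])).symm.toEquiv

theorem standardize_lt_standardize_iff (f : Fin m ↪ α) (a b : Fin m) :
    standardize f a < standardize f b ↔ f a < f b :=
  OrderIso.lt_iff_lt _

theorem eq_standardize_iff (σ : Perm (Fin m)) (f : Fin m ↪ α) :
    σ = standardize f ↔ ∀ a b, σ a < σ b ↔ f a < f b := by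
  refine ⟨fun h a b => h ▸ standardize_lt_standardize_iff f a b, fun h => ?_⟩
  exact Perm.eq_of_lt_iff_lt fun a b => (h a b).trans (standardize_lt_standardize_iff f a b).symm

theorem standardize_eq_one_iff (f : Fin m ↪ α) : standardize f = 1 ↔ StrictMono f := by
  rw [eq_comm, eq_standardize_iff]
  exact ⟨fun h a b hab => (h a b).1 hab, fun h a b => h.lt_iff_lt.symm⟩

end Standardize

theorem Set.OrdConnected.apply_lt_apply {α : Type*} [LinearOrder α] {W : Set α}
    (hW : W.OrdConnected) {g : α → α} (hgW : Set.MapsTo g W W) (hg : ∀ x ∉ W, g x = x)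
    {x y : α} (hxy : x < y) (h : ¬(x ∈ W ∧ y ∈ W)) : g x < g y := by
  by_cases hx : x ∈ W
  · have hy : y ∉ W := fun hy => h ⟨hx, hy⟩
    rw [hg y hy]
    by_contra! hle
    exact hy (hW.out hx (hgW hx) ⟨hxy.le, hle⟩)
  · rw [hg x hx]
    by_cases hy : y ∈ W
    · by_contra! hle
      exact hx (hW.out (hgW hy) hy ⟨hle, hxy.le⟩)
    · rwa [hg y hy]

section Pattern

variable {m n : ℕ}

theorem inversions_one : inversions (1 : Perm (Fin n)) = 0 := by
  rw [inversions, card_eq_zero, filter_eq_empty_iff]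
  exact fun p _ h => lt_asymm h.1 h.2

noncomputable def crossInversions (W : Set (Fin n)) (π : Perm (Fin n)) : ℕ :=
  #{p : Fin n × Fin n | (p.1 < p.2 ∧ π p.2 < π p.1) ∧ ¬(p.1 ∈ W ∧ p.2 ∈ W)}

theorem crossInversions_mul_le {W : Set (Fin n)} (hW : W.OrdConnected) {g : Perm (Fin n)}
    (hgW : Set.MapsTo g W W) (hg : ∀ x ∉ W, g x = x) (π : Perm (Fin n)) :
    crossInversions W (π * g) ≤ crossInversions W π := by
  have hmem : ∀ x, g x ∈ W ↔ x ∈ W := fun x =>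
    ⟨fun h => by_contra fun hx => hx (hg x hx ▸ h), fun h => hgW h⟩
  refine card_le_card_of_injOn (Prod.map g g) (fun p hp => ?_)
    (g.injective.prodMap g.injective).injOn
  rw [mem_coe, mem_filter] at hp ⊢
  obtain ⟨-, ⟨hlt, hinv⟩, hout⟩ := hp
  exact ⟨mem_univ _, ⟨hW.apply_lt_apply hgW hg hlt hout, hinv⟩, by simpa [hmem] using hout⟩

variable (e : Fin m ↪o Fin n)

theorem viaEmbeddingHom_apply_apply (τ : Perm (Fin m)) (a : Fin m) :
    Perm.viaEmbeddingHom e.toEmbedding τ (e a) = e (τ a) :=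
  Perm.viaEmbedding_apply τ e.toEmbedding a

noncomputable def pattern (π : Perm (Fin n)) : Perm (Fin m) :=
  standardize (e.toEmbedding.trans π.toEmbedding)

theorem pattern_lt_pattern_iff (π : Perm (Fin n)) (a b : Fin m) :
    pattern e π a < pattern e π b ↔ π (e a) < π (e b) :=
  standardize_lt_standardize_iff _ a b

theorem eq_pattern_iff (σ : Perm (Fin m)) (π : Perm (Fin n)) :
    σ = pattern e π ↔ ∀ a b, σ a < σ b ↔ π (e a) < π (e b) :=
  eq_standardize_iff σ _

theorem pattern_eq_one_iff (π : Perm (Fin n)) : pattern e π = 1 ↔ StrictMono (π ∘ e) :=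
  standardize_eq_one_iff _

theorem pattern_mul_viaEmbedding (π : Perm (Fin n)) (τ : Perm (Fin m)) :
    pattern e (π * Perm.viaEmbeddingHom e.toEmbedding τ) = pattern e π * τ := by
  refine ((eq_pattern_iff e _ _).2 fun a b => ?_).symm
  simp only [Perm.mul_apply, viaEmbeddingHom_apply_apply, pattern_lt_pattern_iff]

theorem inversions_eq_inversions_pattern_add (π : Perm (Fin n)) :
    inversions π = inversions (pattern e π) + crossInversions (Set.range e) π := by
  rw [inversions, ← card_filter_add_card_filter_not
      (p := fun p => p.1 ∈ Set.range e ∧ p.2 ∈ Set.range e),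
    filter_filter, filter_filter, crossInversions, inversions,
    ← card_map (e.toEmbedding.prodMap e.toEmbedding)]
  congr 1
  · congr 1
    ext ⟨x, y⟩
    simp only [mem_filter, mem_univ, true_and, mem_map, Prod.exists,
      Function.Embedding.coe_prodMap, Prod.map_apply, Prod.mk.injEq]
    constructor
    · rintro ⟨⟨hxy, hπ⟩, ⟨a, rfl⟩, ⟨b, rfl⟩⟩
      exact ⟨a, b, ⟨e.lt_iff_lt.1 hxy, (pattern_lt_pattern_iff e π b a).2 hπ⟩, rfl, rfl⟩
    · rintro ⟨a, b, ⟨hab, hπ⟩, rfl, rfl⟩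
      exact ⟨⟨e.lt_iff_lt.2 hab, (pattern_lt_pattern_iff e π b a).1 hπ⟩, ⟨a, rfl⟩, ⟨b, rfl⟩⟩
  · -- the two filters differ only in their decidability instances
    convert rfl

theorem crossInversions_mul_viaEmbedding (he : (Set.range e).OrdConnected) (π : Perm (Fin n))
    (τ : Perm (Fin m)) :
    crossInversions (Set.range e) (π * Perm.viaEmbeddingHom e.toEmbedding τ) =
      crossInversions (Set.range e) π := by
  have key : ∀ π τ,
      crossInversions (Set.range e) (π * Perm.viaEmbeddingHom e.toEmbedding τ) ≤
        crossInversions (Set.range e) π := fun π τ =>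
    crossInversions_mul_le he
      (by rintro _ ⟨a, rfl⟩; exact ⟨τ a, (viaEmbeddingHom_apply_apply e τ a).symm⟩)
      (fun x hx => Perm.viaEmbedding_apply_of_notMem _ _ x hx) π
  refine le_antisymm (key π τ) ?_
  simpa [mul_assoc, ← map_mul] using key (π * Perm.viaEmbeddingHom e.toEmbedding τ) τ⁻¹

theorem sum_pow_inversions_pattern_eq (he : (Set.range e).OrdConnected) (q : R)
    (σ : Perm (Fin m)) :
    ∑ π with pattern e π = σ, q ^ inversions π =
      q ^ inversions σ * ∑ π with pattern e π = 1, q ^ inversions π := by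
  rw [mul_sum]
  refine sum_equiv (Equiv.mulRight (Perm.viaEmbeddingHom e.toEmbedding σ⁻¹)) (fun π => ?_)
    (fun π hπ => ?_)
  · simp only [mem_filter, mem_univ, true_and, coe_mulRight]
    rw [pattern_mul_viaEmbedding, mul_inv_eq_one]
  · rw [mem_filter] at hπ
    rw [coe_mulRight, inversions_eq_inversions_pattern_add e π,
      inversions_eq_inversions_pattern_add e (π * _), pattern_mul_viaEmbedding,
      crossInversions_mul_viaEmbedding e he, hπ.2, mul_inv_cancel, inversions_one, zero_add,
      pow_add]

theorem sum_pow_inversions_eq_mul (he : (Set.range e).OrdConnected) (q : R) :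
    ∑ π : Perm (Fin n), q ^ inversions π =
      (∑ σ : Perm (Fin m), q ^ inversions σ) * ∑ π with pattern e π = 1, q ^ inversions π := by
  rw [← sum_fiberwise univ (pattern e), sum_mul]
  exact sum_congr rfl fun σ _ => sum_pow_inversions_pattern_eq e he q σ

end Pattern

section Normalization

theorem ordConnected_range_succOrderEmb (k : ℕ) :
    (Set.range (Fin.succOrderEmb k)).OrdConnected := by
  have hrange : Set.range (Fin.succOrderEmb k) = Set.Ioi 0 := by
    ext x
    simp [Fin.pos_iff_ne_zero]
  rw [hrange]
  exact Set.ordConnected_Ioi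

variable {k : ℕ}

theorem inversions_eq_of_strictMono_comp_succ {π : Perm (Fin (k + 1))}
    (h : StrictMono (π ∘ Fin.succ)) : inversions π = π 0 := by
  have hinv : ({p | p.1 < p.2 ∧ π p.2 < π p.1} : Finset (Fin (k + 1) × Fin (k + 1))) =
      ({y | π y < π 0} : Finset _).map (Function.Embedding.sectR 0 _) := by
    ext ⟨x, y⟩
    simp only [mem_filter, mem_univ, true_and, mem_map]
    constructor
    · rintro ⟨hxy, hπ⟩
      obtain rfl : x = 0 := by
        by_contra hx
        obtain ⟨a, rfl⟩ := Fin.exists_succ_eq.2 hx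
        obtain ⟨b, rfl⟩ :=
          Fin.exists_succ_eq.2 (Fin.pos_iff_ne_zero.1 ((Fin.zero_le _).trans_lt hxy))
        exact hπ.not_gt (h (Fin.succ_lt_succ_iff.1 hxy))
      exact ⟨y, hπ, rfl⟩
    · rintro ⟨y, hy, ⟨⟩⟩
      exact ⟨Fin.pos_iff_ne_zero.2 fun h0 => (h0 ▸ hy).false, hy⟩
  rw [inversions, hinv, card_map, ← Fin.card_Iio (π 0)]
  exact card_equiv π fun y => by simp

theorem eq_of_strictMono_comp_succ {π π' : Perm (Fin (k + 1))} (h : StrictMono (π ∘ Fin.succ))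
    (h' : StrictMono (π' ∘ Fin.succ)) (h0 : π 0 = π' 0) : π = π' := by
  have hcard : #(univ.erase (π 0)) = k := by simp
  have hsorted : ∀ ρ : Perm (Fin (k + 1)), StrictMono (ρ ∘ Fin.succ) → ρ 0 = π 0 →
      ρ ∘ Fin.succ = (univ.erase (π 0)).orderEmbOfFin hcard := fun ρ hρ hρ0 =>
    orderEmbOfFin_unique hcard (fun a => by simp [← hρ0, Fin.succ_ne_zero]) hρ
  refine Equiv.ext fun x => Fin.cases h0 (fun a => ?_) x
  exact congrFun ((hsorted π h rfl).trans (hsorted π' h' h0.symm).symm) a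

theorem sum_pow_inversions_pattern_succ_eq_one (q : R) :
    ∑ π with pattern (Fin.succOrderEmb k) π = 1, q ^ inversions π =
      ∑ i ∈ range (k + 1), q ^ i := by
  have hcycle : ∀ j : Fin (k + 1), StrictMono ((Fin.cycleRange j).symm ∘ Fin.succ) := fun j => by
    simpa [Function.comp_def, Fin.cycleRange_symm_succ] using Fin.strictMono_succAbove j
  simp only [pattern_eq_one_iff, Fin.coe_succOrderEmb]
  rw [← Fin.sum_univ_eq_sum_range]
  refine sum_bij' (fun π _ => π 0) (fun j _ => (Fin.cycleRange j).symm) (fun _ _ => mem_univ _)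
    (fun j _ => by simpa using hcycle j) (fun π hπ => ?_) (fun j _ => Fin.cycleRange_symm_zero j)
    (fun π hπ => ?_)
  · rw [mem_filter] at hπ
    exact eq_of_strictMono_comp_succ (hcycle _) hπ.2 (Fin.cycleRange_symm_zero _)
  · rw [mem_filter] at hπ
    rw [inversions_eq_of_strictMono_comp_succ hπ.2]

end Normalization

theorem sum_pow_inversions_eq_qfact (q : ℝ) (k : ℕ) :
    ∑ π : Perm (Fin k), q ^ inversions π = qfact q k := by
  induction k with
  | zero => simp [qfact, inversions]
  | succ k ih =>
    rw [sum_pow_inversions_eq_mul _ (ordConnected_range_succOrderEmb k), ih,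
      sum_pow_inversions_pattern_succ_eq_one, qfact, qfact, prod_range_succ, qint]

theorem qfact_pos {q : ℝ} (hq : 0 < q) (k : ℕ) : 0 < qfact q k :=
  prod_pos fun _ _ => sum_pos (fun j _ => pow_pos hq j) nonempty_range_add_one

section Window

variable {m n : ℕ}

def window (i : ℕ) (hi : i + m ≤ n) : Fin m ↪o Fin n :=
  (Fin.natAddOrderEmb i).trans (Fin.castLEOrderEmb hi)

theorem ordConnected_range_window (i : ℕ) (hi : i + m ≤ n) :
    (Set.range (window i hi)).OrdConnected := by
  refine ⟨?_⟩
  rintro _ ⟨a, rfl⟩ _ ⟨b, rfl⟩ x ⟨hax, hxb⟩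
  have hax : i + a ≤ x := hax
  have hxb : x ≤ i + (b : ℕ) := hxb
  exact ⟨⟨x - i, by omega⟩, Fin.ext (by simp [window]; omega)⟩

theorem occursAt_iff_pattern_window_eq (σ : Perm (Fin m)) (π : Perm (Fin n)) (i : ℕ)
    (hi : i + m ≤ n) : occursAt σ π i ↔ pattern (window i hi) π = σ := by
  rw [eq_comm, eq_pattern_iff]
  exact ⟨fun ⟨_, h⟩ => h, fun h => ⟨hi, h⟩⟩

end Window

/-- consecutive homogeneity: under Mallows(q) on `S_n`, the probability that
the window of length `m` starting at position `i` (0-indexed, `i + m ≤ n`) standardizes to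
`σ` equals `q^{inv σ}/[m]_q!`, independently of `i` and `n`. -/
theorem mallows_window_probability (m n : ℕ) (σ : Equiv.Perm (Fin m)) (q : ℝ)
    (hq : 0 < q) (i : ℕ) (hi : i + m ≤ n) :
    (∑ π ∈ Finset.univ.filter (fun π : Equiv.Perm (Fin n) => occursAt σ π i),
        q ^ inversions π) / qfact q n
      = q ^ inversions σ / qfact q m := by
  have hW := ordConnected_range_window i hi
  simp_rw [occursAt_iff_pattern_window_eq σ _ i hi]
  rw [sum_pow_inversions_pattern_eq _ hW,
    div_eq_div_iff (qfact_pos hq n).ne' (qfact_pos hq m).ne', ← sum_pow_inversions_eq_qfact q n,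
    sum_pow_inversions_eq_mul _ hW, sum_pow_inversions_eq_qfact]
  ring
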